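/- arXiv:2302.02582 — 3 statements merged into one kernel-verified Lean document; each statement's English description precedes it below -/
import Mathlib

section
/- Suppose α, β > 0, γ > 1, σ > 4η > 0, and let (u⁎, v⁎) with u⁎ > 0 and v⁎ > 0 satisfy F₁(u⁎,v⁎) = 0 and F₂(u⁎,v⁎) = 0. Then u⁎ > α/(γ−1) and u₂ < u⁎ < u₁, i.e. u⁎ > max{α/(γ−1), u₂}, where u₁ = (σ + √(σ² − 4ση))/(2σ) and u₂ = (σ − √(σ² − 4ση))/(2σ) are the roots of σu(1−u) − η = 0. -/
/-!
At a coexistence equilibrium the predator equation forces the functional-response denominator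
to equal `γ u⁎`, i.e. `(γ - 1) u⁎ = α + β v⁎ > α`. Dividing the prey equation by `u⁎` then gives
`σ u⁎ (1 - u⁎) - η = v⁎ / (γ u⁎) > 0`, and a point where the concave parabola
`σ u (1 - u) - η` is positive lies strictly between its roots.
-/

lemma eq_mul_of_mul_mul_div_sub_eq_zero {γ u v D : ℝ} (hv : v ≠ 0)
    (h : γ * u * v / D - v = 0) : D = γ * u := by
  have hD : D ≠ 0 := by
    rintro rfl
    exact hv (by simpa using h)
  field_simp at h
  exact mul_left_cancel₀ hv (by linarith)

lemma mem_Ioo_of_lt_mul_mul_one_sub {σ η u : ℝ} (hσ : 0 < σ) (h : η < σ * u * (1 - u)) :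
    u ∈ Set.Ioo ((σ - √(σ ^ 2 - 4 * σ * η)) / (2 * σ)) ((σ + √(σ ^ 2 - 4 * σ * η)) / (2 * σ)) := by
  have hsq : (2 * σ * u - σ) ^ 2 < σ ^ 2 - 4 * σ * η := by nlinarith
  obtain ⟨hlo, hhi⟩ := abs_lt.1 ((Real.lt_sqrt (abs_nonneg _)).2 (by rwa [sq_abs]))
  constructor
  · rw [div_lt_iff₀ (by positivity)]; linarith
  · rw [lt_div_iff₀ (by positivity)]; linarith

theorem stmt_3_general (α β γ σ η : ℝ) (hβ : 0 < β) (hγ : 1 < γ)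
    (hη : 0 < η) (hσ : 4 * η < σ)
    (us vs : ℝ) (hus : 0 < us) (hvs : 0 < vs)
    (hF₁ : σ * us ^ 2 * (1 - us) - η * us - us * vs / (α + us + β * vs) = 0)
    (hF₂ : γ * us * vs / (α + us + β * vs) - vs = 0)
    (u₁ u₂ : ℝ)
    (hu₁ : u₁ = (σ + Real.sqrt (σ ^ 2 - 4 * σ * η)) / (2 * σ))
    (hu₂ : u₂ = (σ - Real.sqrt (σ ^ 2 - 4 * σ * η)) / (2 * σ)) :
    α / (γ - 1) < us ∧ u₂ < us ∧ us < u₁ := by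
  have hD : α + us + β * vs = γ * us := eq_mul_of_mul_mul_div_sub_eq_zero hvs.ne' hF₂
  have hγ₀ : 0 < γ := by linarith
  have hprey : σ * us * (1 - us) - η = vs / (γ * us) := by
    rw [hD] at hF₁
    field_simp at hF₁ ⊢
    linarith
  have hq : η < σ * us * (1 - us) := by
    have : 0 < vs / (γ * us) := by positivity
    linarith
  refine ⟨?_, ?_⟩
  · rw [div_lt_iff₀ (sub_pos.2 hγ)]
    nlinarith [mul_pos hβ hvs]
  · subst hu₁ hu₂
    exact mem_Ioo_of_lt_mul_mul_one_sub (by linarith) hq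

/-- Any interior (coexisting) equilibrium `(u⁎,v⁎)` of the kinetics with `α, β > 0`,
`γ > 1` and `σ > 4η > 0` satisfies `u⁎ > α/(γ-1)` and `u₂ < u⁎ < u₁`, where
`u₁, u₂` are the roots of `σu(1-u) - η = 0`. -/
theorem stmt_3 (α β γ σ η : ℝ) (hα : 0 < α) (hβ : 0 < β) (hγ : 1 < γ)
    (hη : 0 < η) (hσ : 4 * η < σ)
    (us vs : ℝ) (hus : 0 < us) (hvs : 0 < vs)
    (hF₁ : σ * us ^ 2 * (1 - us) - η * us - us * vs / (α + us + β * vs) = 0)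
    (hF₂ : γ * us * vs / (α + us + β * vs) - vs = 0)
    (u₁ u₂ : ℝ)
    (hu₁ : u₁ = (σ + Real.sqrt (σ ^ 2 - 4 * σ * η)) / (2 * σ))
    (hu₂ : u₂ = (σ - Real.sqrt (σ ^ 2 - 4 * σ * η)) / (2 * σ)) :
    α / (γ - 1) < us ∧ u₂ < us ∧ us < u₁ :=
  stmt_3_general α β γ σ η hβ hγ hη hσ us vs hus hvs hF₁ hF₂ u₁ u₂ hu₁ hu₂
end

section
/- Let α > 0, β > 0 and M > 0. Then for all real numbers u, ū ∈ (0, M] and v, v̄ > 0, one has (ū − u)·( uv/(α+u+βv) − ūv̄/(α+ū+βv̄) ) ≤ (M/α)·|u − ū|·|v − v̄| ≤ (M/(2α))·((u−ū)² + (v−v̄)²). -/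
/-!
Write `f(u, v) = uv/(α + u + βv)` and split
`f(u, v) - f(ū, v̄) = (f(u, v) - f(u, v̄)) + (f(u, v̄) - f(ū, v̄))`.
Since `f` is increasing in `u`, the second part contributes a nonpositive amount after
multiplication by `ū - u`. The first part equals `u(α + u)(v - v̄)/((α + u + βv)(α + u + βv̄))`,
whose coefficient is at most `u/α ≤ M/α`. The second inequality is `2|a||b| ≤ a² + b²`.
-/

/-- The Beddington–DeAngelis functional response. -/
noncomputable def bdResponse (α β u v : ℝ) : ℝ := u * v / (α + u + β * v)

section BDResponse

variable {α β : ℝ}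

theorem bdResponse_le_bdResponse_left {u u' v : ℝ} (hc : 0 < α + β * v) (hv : 0 ≤ v)
    (hu : 0 ≤ u) (huu' : u ≤ u') : bdResponse α β u v ≤ bdResponse α β u' v := by
  unfold bdResponse
  rw [div_le_div_iff₀ (by linarith) (by linarith)]
  nlinarith [mul_nonneg hv (mul_nonneg hc.le (sub_nonneg.2 huu'))]

theorem sub_mul_bdResponse_sub_nonpos {u u' v : ℝ} (hc : 0 < α + β * v) (hv : 0 ≤ v)
    (hu : 0 ≤ u) (hu' : 0 ≤ u') :
    (u' - u) * (bdResponse α β u v - bdResponse α β u' v) ≤ 0 := by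
  rcases le_total u u' with h | h
  · exact mul_nonpos_of_nonneg_of_nonpos (sub_nonneg.2 h)
      (sub_nonpos.2 (bdResponse_le_bdResponse_left hc hv hu h))
  · exact mul_nonpos_of_nonpos_of_nonneg (sub_nonpos.2 h)
      (sub_nonneg.2 (bdResponse_le_bdResponse_left hc hv hu' h))

theorem bdResponse_sub_bdResponse_right {u v w : ℝ} (hv : α + u + β * v ≠ 0)
    (hw : α + u + β * w ≠ 0) :
    bdResponse α β u v - bdResponse α β u w =
      u * (α + u) / ((α + u + β * v) * (α + u + β * w)) * (v - w) := by
  rw [bdResponse, bdResponse, div_sub_div _ _ hv hw, div_mul_eq_mul_div]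
  congr 1
  ring

theorem abs_bdResponse_sub_bdResponse_right_le (hα : 0 < α) (hβ : 0 ≤ β) {u v w : ℝ}
    (hu : 0 ≤ u) (hv : 0 ≤ v) (hw : 0 ≤ w) :
    |bdResponse α β u v - bdResponse α β u w| ≤ u / α * |v - w| := by
  have hDv : α + u ≤ α + u + β * v := le_add_of_nonneg_right (mul_nonneg hβ hv)
  have hDw : α ≤ α + u + β * w := by nlinarith [mul_nonneg hβ hw]
  have hcoeff : u * (α + u) / ((α + u + β * v) * (α + u + β * w)) ≤ u / α := by
    rw [div_le_div_iff₀ (by positivity) hα]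
    rw [mul_assoc]
    exact mul_le_mul_of_nonneg_left (mul_le_mul hDv hDw hα.le (by positivity)) hu
  rw [bdResponse_sub_bdResponse_right (by positivity) (by positivity), abs_mul,
    abs_of_nonneg (by positivity)]
  exact mul_le_mul_of_nonneg_right hcoeff (abs_nonneg _)

theorem sub_mul_bdResponse_sub_le (hα : 0 < α) (hβ : 0 ≤ β) {u ub v vb : ℝ} (hu : 0 ≤ u)
    (hub : 0 ≤ ub) (hv : 0 ≤ v) (hvb : 0 ≤ vb) :
    (ub - u) * (bdResponse α β u v - bdResponse α β ub vb) ≤ u / α * (|u - ub| * |v - vb|) := by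
  have hmono := sub_mul_bdResponse_sub_nonpos (by positivity) hvb hu hub (α := α) (β := β)
  have hlip := abs_bdResponse_sub_bdResponse_right_le hα hβ hu hv hvb
  calc (ub - u) * (bdResponse α β u v - bdResponse α β ub vb)
      = (ub - u) * (bdResponse α β u v - bdResponse α β u vb)
          + (ub - u) * (bdResponse α β u vb - bdResponse α β ub vb) := by ring
    _ ≤ |ub - u| * |bdResponse α β u v - bdResponse α β u vb| + 0 :=
        add_le_add ((le_abs_self _).trans (abs_mul _ _).le) hmono
    _ ≤ |u - ub| * (u / α * |v - vb|) := by
        rw [add_zero, abs_sub_comm ub u]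
        exact mul_le_mul_of_nonneg_left hlip (abs_nonneg _)
    _ = u / α * (|u - ub| * |v - vb|) := by ring

end BDResponse

theorem abs_mul_abs_le_half_add_sq (a b : ℝ) : |a| * |b| ≤ (a ^ 2 + b ^ 2) / 2 := by
  nlinarith [two_mul_le_add_sq |a| |b|, sq_abs a, sq_abs b]

theorem stmt_13_general (α β M : ℝ) (hα : 0 < α) (hβ : 0 < β) :
    ∀ u ub v vb : ℝ, 0 < u → u ≤ M → 0 < ub → ub ≤ M → 0 < v → 0 < vb →
      (ub - u) * (u * v / (α + u + β * v) - ub * vb / (α + ub + β * vb)) ≤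
          M / α * (|u - ub| * |v - vb|) ∧
      M / α * (|u - ub| * |v - vb|) ≤
          M / (2 * α) * ((u - ub) ^ 2 + (v - vb) ^ 2) := by
  intro u ub v vb hu huM hub _ hv hvb
  have hM : 0 ≤ M / α := div_nonneg (hu.le.trans huM) hα.le
  refine ⟨?_, ?_⟩
  · calc (ub - u) * (bdResponse α β u v - bdResponse α β ub vb)
        ≤ u / α * (|u - ub| * |v - vb|) :=
          sub_mul_bdResponse_sub_le hα hβ.le hu.le hub.le hv.le hvb.le
      _ ≤ M / α * (|u - ub| * |v - vb|) := by gcongr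
  · calc M / α * (|u - ub| * |v - vb|)
        ≤ M / α * (((u - ub) ^ 2 + (v - vb) ^ 2) / 2) :=
          mul_le_mul_of_nonneg_left (abs_mul_abs_le_half_add_sq _ _) hM
      _ = M / (2 * α) * ((u - ub) ^ 2 + (v - vb) ^ 2) := by ring

/-- Pointwise bound behind the estimate of `I₂`: for `α, β > 0`, `M > 0`, all
`u, ū ∈ (0, M]` and `v, v̄ > 0`,
`(ū - u)(uv/(α+u+βv) - ūv̄/(α+ū+βv̄)) ≤ (M/α)|u-ū||v-v̄| ≤ (M/(2α))((u-ū)² + (v-v̄)²)`. -/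
theorem stmt_13 (α β M : ℝ) (hα : 0 < α) (hβ : 0 < β) (hM : 0 < M) :
    ∀ u ub v vb : ℝ, 0 < u → u ≤ M → 0 < ub → ub ≤ M → 0 < v → 0 < vb →
      (ub - u) * (u * v / (α + u + β * v) - ub * vb / (α + ub + β * vb)) ≤
          M / α * (|u - ub| * |v - vb|) ∧
      M / α * (|u - ub| * |v - vb|) ≤
          M / (2 * α) * ((u - ub) ^ 2 + (v - vb) ^ 2) :=
  stmt_13_general α β M hα hβ
end

section
/- Let α > 0, β > 0 and γ > 0. Then for all real numbers u, ū > 0 and v, v̄ > 0, one has (v − v̄)·v̄·( γu/(α+u+βv) − γū/(α+ū+βv̄) ) ≤ (γ/β)·|u − ū|·|v − v̄| ≤ (γ/(2β))·((u−ū)² + (v−v̄)²). -/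
/-! Over the common denominator `D₁D₂`, with `D₁ = α + u + βv` and `D₂ = α + ū + βv̄`, the
left-hand side is `γv̄(α + βv)(u - ū)(v - v̄)/(D₁D₂) - γβuv̄(v - v̄)²/(D₁D₂)`. The second term
is nonpositive, and the weight of the first is at most `γ/β` because `α + βv ≤ D₁` and
`βv̄ ≤ D₂`. The second inequality is `2ab ≤ a² + b²`. -/

lemma div_sub_div_beddingtonDeAngelis (α β γ u ub v vb : ℝ)
    (h₁ : α + u + β * v ≠ 0) (h₂ : α + ub + β * vb ≠ 0) :
    γ * u / (α + u + β * v) - γ * ub / (α + ub + β * vb) =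
      γ * ((α + β * v) * (u - ub) - β * u * (v - vb)) /
        ((α + u + β * v) * (α + ub + β * vb)) := by
  rw [div_sub_div _ _ h₁ h₂]
  ring

section

variable {α β γ u ub v vb : ℝ} (hα : 0 < α) (hβ : 0 < β) (hγ : 0 ≤ γ)
  (hu : 0 ≤ u) (hub : 0 ≤ ub) (hv : 0 ≤ v) (hvb : 0 ≤ vb)
include hα hβ hγ hu hub hv hvb

lemma beddingtonDeAngelis_weight_le :
    γ * vb * (α + β * v) / ((α + u + β * v) * (α + ub + β * vb)) ≤ γ / β := by
  have hD : 0 < (α + u + β * v) * (α + ub + β * vb) := by positivity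
  have hprod : (α + β * v) * (β * vb) ≤ (α + u + β * v) * (α + ub + β * vb) :=
    mul_le_mul (by linarith) (by linarith) (by positivity) (by positivity)
  rw [div_le_div_iff₀ hD hβ]
  linarith [mul_le_mul_of_nonneg_left hprod hγ]

lemma beddingtonDeAngelis_cross_le :
    (v - vb) * vb * (γ * u / (α + u + β * v) - γ * ub / (α + ub + β * vb)) ≤
      γ / β * (|u - ub| * |v - vb|) := by
  have hD₁ : 0 < α + u + β * v := by positivity
  have hD₂ : 0 < α + ub + β * vb := by positivity
  set c := γ * vb * (α + β * v) / ((α + u + β * v) * (α + ub + β * vb))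
  calc (v - vb) * vb * (γ * u / (α + u + β * v) - γ * ub / (α + ub + β * vb))
        = c * ((u - ub) * (v - vb)) -
            γ * β * u * vb * (v - vb) ^ 2 / ((α + u + β * v) * (α + ub + β * vb)) := by
          rw [div_sub_div_beddingtonDeAngelis _ _ _ _ _ _ _ hD₁.ne' hD₂.ne']
          ring
    _ ≤ c * ((u - ub) * (v - vb)) := sub_le_self _ (by positivity)
    _ ≤ c * (|u - ub| * |v - vb|) :=
          mul_le_mul_of_nonneg_left (abs_mul (u - ub) (v - vb) ▸ le_abs_self _) (by positivity)
    _ ≤ γ / β * (|u - ub| * |v - vb|) :=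
          mul_le_mul_of_nonneg_right
            (beddingtonDeAngelis_weight_le hα hβ hγ hu hub hv hvb) (by positivity)

end

lemma mul_abs_mul_abs_le_div_two_mul_add_sq {k : ℝ} (hk : 0 ≤ k) (a b : ℝ) :
    k * (|a| * |b|) ≤ k / 2 * (a ^ 2 + b ^ 2) := by
  calc k * (|a| * |b|) = k / 2 * (2 * |a| * |b|) := by ring
    _ ≤ k / 2 * (|a| ^ 2 + |b| ^ 2) :=
          mul_le_mul_of_nonneg_left (two_mul_le_add_sq _ _) (by positivity)
    _ = k / 2 * (a ^ 2 + b ^ 2) := by rw [sq_abs, sq_abs]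

/-- Pointwise bound behind the estimate of `I₃`: for `α, β, γ > 0`, all `u, ū > 0`
and `v, v̄ > 0`,
`(v - v̄)·v̄·(γu/(α+u+βv) - γū/(α+ū+βv̄)) ≤ (γ/β)|u-ū||v-v̄| ≤ (γ/(2β))((u-ū)² + (v-v̄)²)`. -/
theorem stmt_14 (α β γ : ℝ) (hα : 0 < α) (hβ : 0 < β) (hγ : 0 < γ) :
    ∀ u ub v vb : ℝ, 0 < u → 0 < ub → 0 < v → 0 < vb →
      (v - vb) * vb * (γ * u / (α + u + β * v) - γ * ub / (α + ub + β * vb)) ≤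
          γ / β * (|u - ub| * |v - vb|) ∧
      γ / β * (|u - ub| * |v - vb|) ≤
          γ / (2 * β) * ((u - ub) ^ 2 + (v - vb) ^ 2) := by
  intro u ub v vb hu hub hv hvb
  refine ⟨beddingtonDeAngelis_cross_le hα hβ hγ.le hu.le hub.le hv.le hvb.le, ?_⟩
  rw [div_mul_eq_div_div_swap]
  exact mul_abs_mul_abs_le_div_two_mul_add_sq (by positivity) _ _
end
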